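/- For all real (or complex) s, t: ∫₀ˢ (∂/∂t){t+u brace u} du = 2s(s+1)C₂(st) + s²(t+s)C₃(st), where the integrand's partial derivative is taken before integration and C_ν denotes the Bessel-Clifford function. -/

import Mathlib

/-- The real Bessel–Clifford function of the first kind `C_ν(z) = ∑ z^m/(m!(m+ν)!)`. -/
noncomputable def besselCliffordR (ν : ℕ) (z : ℝ) : ℝ :=
  ∑' m : ℕ, z ^ m / ((Nat.factorial m : ℝ) * (Nat.factorial (m + ν) : ℝ))

/-- The (real) continuous binomial coefficient `{t brace a}`. -/
noncomputable def contBinomR (t a : ℝ) : ℝ :=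
  2 * ∑' n : ℕ, a ^ n * (t - a) ^ n / ((Nat.factorial n : ℝ) ^ 2) +
    t * ∑' n : ℕ, a ^ n * (t - a) ^ n / ((Nat.factorial (n + 1) : ℝ) * (Nat.factorial n : ℝ))

/-!
The continuous binomial coefficient is `{t+u brace u} = 2 C₀(ut) + (t+u) C₁(ut)`, and
`C_ν' = C_{ν+1}`, so its `t`-derivative is `(2u+1) C₁(ut) + u(t+u) C₂(ut)`. By the recurrence
`C_ν = (ν+1) C_{ν+1} + z C_{ν+2}` this is the `u`-derivative of
`2u(u+1) C₂(ut) + u²(t+u) C₃(ut)`, which vanishes at `u = 0`; the fundamental theorem of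
calculus concludes.
-/

open scoped Nat

noncomputable def besselCliffordTerm (ν : ℕ) (z : ℝ) (m : ℕ) : ℝ :=
  z ^ m / ((m ! : ℝ) * ((m + ν)! : ℝ))

lemma norm_besselCliffordTerm_le (ν : ℕ) (z : ℝ) (m : ℕ) :
    ‖besselCliffordTerm ν z m‖ ≤ |z| ^ m / m ! := by
  rw [besselCliffordTerm, norm_div, norm_pow, Real.norm_eq_abs, Real.norm_of_nonneg (by positivity)]
  gcongr
  exact le_mul_of_one_le_right (by positivity) (mod_cast (m + ν).factorial_pos)

lemma summable_besselCliffordTerm (ν : ℕ) (z : ℝ) : Summable (besselCliffordTerm ν z) :=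
  .of_norm_bounded (Real.summable_pow_div_factorial |z|) (norm_besselCliffordTerm_le ν z)

lemma hasDerivAt_besselCliffordTerm_succ (ν m : ℕ) (z : ℝ) :
    HasDerivAt (fun y => besselCliffordTerm ν y (m + 1)) (besselCliffordTerm (ν + 1) z m) z := by
  refine ((hasDerivAt_pow (m + 1) z).div_const (((m + 1)! : ℝ) * ((m + 1 + ν)! : ℝ))).congr_deriv
    ?_
  rw [besselCliffordTerm, Nat.factorial_succ, show m + 1 + ν = m + (ν + 1) by ring,
    Nat.add_sub_cancel]
  push_cast
  field_simp

theorem hasDerivAt_besselCliffordR (ν : ℕ) (z : ℝ) :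
    HasDerivAt (besselCliffordR ν) (besselCliffordR (ν + 1) z) z := by
  have hz : z ∈ Metric.ball (0 : ℝ) (|z| + 1) := by simp
  have hseries : HasDerivAt (fun y => ∑' m, besselCliffordTerm ν y (m + 1))
      (besselCliffordR (ν + 1) z) z :=
    hasDerivAt_tsum_of_isPreconnected (Real.summable_pow_div_factorial (|z| + 1))
      Metric.isOpen_ball (convex_ball _ _).isPreconnected
      (fun m y _ => hasDerivAt_besselCliffordTerm_succ ν m y)
      (fun m y hy => (norm_besselCliffordTerm_le _ y m).trans <| by
        gcongr; exact (mem_ball_zero_iff.1 hy).le)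
      hz ((summable_nat_add_iff 1).2 (summable_besselCliffordTerm ν z)) hz
  have hconst : HasDerivAt (fun y => besselCliffordTerm ν y 0) 0 z := by
    simpa [besselCliffordTerm] using hasDerivAt_const z _
  have hsplit : besselCliffordR ν =
      fun y => besselCliffordTerm ν y 0 + ∑' m, besselCliffordTerm ν y (m + 1) :=
    funext fun y => (summable_besselCliffordTerm ν y).tsum_eq_zero_add
  rw [hsplit]
  exact (hconst.add hseries).congr_deriv (zero_add _)

theorem besselCliffordR_eq_add (ν : ℕ) (z : ℝ) :
    besselCliffordR ν z =
      (ν + 1) * besselCliffordR (ν + 1) z + z * besselCliffordR (ν + 2) z := by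
  -- `d m = m z^m / (m! (m+ν+1)!)` vanishes at `m = 0` and its shift is the series of `z C_{ν+2}`.
  set d := fun m => besselCliffordTerm ν z m - (ν + 1) * besselCliffordTerm (ν + 1) z m
  have hd0 : d 0 = 0 := by
    simp only [d, besselCliffordTerm, pow_zero, Nat.factorial_zero, Nat.cast_one, zero_add,
      one_mul, Nat.factorial_succ, Nat.cast_mul, Nat.cast_add]
    field_simp
    ring
  have hd_succ (m : ℕ) : d (m + 1) = z * besselCliffordTerm (ν + 2) z m := by
    simp only [d, besselCliffordTerm, Nat.factorial_succ, show m + 1 + ν = m + ν + 1 by ring,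
      show m + 1 + (ν + 1) = m + ν + 1 + 1 by ring, show m + (ν + 2) = m + ν + 1 + 1 by ring]
    push_cast
    field_simp
    ring
  have hsum : ∑' m, d m = z * besselCliffordR (ν + 2) z := by
    rw [tsum_eq_zero_add', hd0, zero_add]
    · simp_rw [hd_succ]; exact tsum_mul_left
    · simp_rw [hd_succ]; exact (summable_besselCliffordTerm _ z).mul_left z
  rw [← hsum, Summable.tsum_sub (summable_besselCliffordTerm ν z)
    ((summable_besselCliffordTerm _ z).mul_left _), tsum_mul_left]
  simp only [besselCliffordR, besselCliffordTerm]
  ring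

theorem contBinomR_add_self (x u : ℝ) :
    contBinomR (x + u) u = 2 * besselCliffordR 0 (u * x) + (x + u) * besselCliffordR 1 (u * x) := by
  simp only [contBinomR, besselCliffordR, add_sub_cancel_right, mul_pow, add_zero, sq]
  congr 3 with n
  ring

theorem hasDerivAt_contBinomR_add_self (u t : ℝ) :
    HasDerivAt (fun x => contBinomR (x + u) u)
      ((2 * u + 1) * besselCliffordR 1 (u * t) + u * (t + u) * besselCliffordR 2 (u * t)) t := by
  have hC (ν : ℕ) : HasDerivAt (fun x => besselCliffordR ν (u * x))
      (besselCliffordR (ν + 1) (u * t) * u) t :=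
    (hasDerivAt_besselCliffordR ν _).comp t (hasDerivAt_const_mul u)
  simp_rw [contBinomR_add_self]
  refine (((hC 0).const_mul 2).add (((hasDerivAt_id t).add_const u).mul (hC 1))).congr_deriv ?_
  simp only [id_eq]
  ring

theorem hasDerivAt_contBinomR_primitive (t u : ℝ) :
    HasDerivAt (fun u => 2 * u * (u + 1) * besselCliffordR 2 (u * t) +
        u ^ 2 * (t + u) * besselCliffordR 3 (u * t))
      ((2 * u + 1) * besselCliffordR 1 (u * t) + u * (t + u) * besselCliffordR 2 (u * t)) u := by
  have hC (ν : ℕ) : HasDerivAt (fun x => besselCliffordR ν (x * t))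
      (besselCliffordR (ν + 1) (u * t) * t) u :=
    (hasDerivAt_besselCliffordR ν _).comp u (hasDerivAt_mul_const t)
  have hp : HasDerivAt (fun x => 2 * x * (x + 1)) (4 * u + 2) u := by
    refine (((hasDerivAt_id u).const_mul 2).mul ((hasDerivAt_id u).add_const 1)).congr_deriv ?_
    simp only [id_eq]
    ring
  have hq : HasDerivAt (fun x => x ^ 2 * (t + x)) (2 * u * (t + u) + u ^ 2) u := by
    refine ((hasDerivAt_pow 2 u).mul ((hasDerivAt_id u).const_add t)).congr_deriv ?_
    simp only [id_eq]
    ring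
  refine ((hp.mul (hC 2)).add (hq.mul (hC 3))).congr_deriv ?_
  rw [besselCliffordR_eq_add 1, besselCliffordR_eq_add 2]
  push_cast
  ring

theorem integral_deriv_contBinom (s t : ℝ) :
    ∫ u in (0:ℝ)..s, deriv (fun t' : ℝ => contBinomR (t' + u) u) t =
      2 * s * (s + 1) * besselCliffordR 2 (s * t) +
        s ^ 2 * (t + s) * besselCliffordR 3 (s * t) := by
  have hC (ν : ℕ) : Continuous (besselCliffordR ν) :=
    continuous_iff_continuousAt.2 fun z => (hasDerivAt_besselCliffordR ν z).continuousAt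
  simp_rw [fun u => (hasDerivAt_contBinomR_add_self u t).deriv]
  have hint : IntervalIntegrable (fun u => (2 * u + 1) * besselCliffordR 1 (u * t) +
      u * (t + u) * besselCliffordR 2 (u * t)) MeasureTheory.volume 0 s :=
    Continuous.intervalIntegrable (by fun_prop) 0 s
  rw [intervalIntegral.integral_eq_sub_of_hasDerivAt
    (fun u _ => hasDerivAt_contBinomR_primitive t u) hint]
  simp
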